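/- arXiv:2502.07891 — 2 statements merged into one kernel-verified Lean document; each statement's English description precedes it below -/
import Mathlib

section
/- Let 𝔊 and 𝔊' be two mDAGs with the same set of nodes. If 𝔊 structurally dominates 𝔊', then 𝔊 observationally dominates 𝔊': for every assignment c of finite cardinalities to the visible nodes, every probability distribution realizable by 𝔊' at c is realizable by 𝔊 at c. -/
open scoped Classical

/-! ## Basic structures: pDAGs and mDAGs -/

/-- A partitioned directed acyclic graph (pDAG) with visible node type `V` and
latent node type `L`.  Acyclicity is phrased via the existence of a topological
rank function, which for finite graphs is equivalent to the absence of directed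
cycles. -/
structure pDAG (V L : Type) where
  edge : V ⊕ L → V ⊕ L → Prop
  acyclic : ∃ rank : V ⊕ L → ℕ, ∀ a b, edge a b → rank a < rank b

/-- `P` is a probability distribution on a finite type. -/
def IsDist {α : Type} [Fintype α] (P : α → ℝ) : Prop :=
  (∀ x, 0 ≤ P x) ∧ ∑ x, P x = 1

/-- The joint assignment of outcomes to all (visible and latent) nodes obtained
from an assignment `xv` to the visible nodes and `xl` to the latent nodes. -/
def jointVal {V L : Type} (c : V → ℕ) (k : L → ℕ)
    (xv : (v : V) → Fin (c v)) (xl : (l : L) → Fin (k l)) :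
    (a : V ⊕ L) → Fin (Sum.elim c k a)
  | Sum.inl v => xv v
  | Sum.inr l => xl l

/-- A probability distribution `P` over the visible variables (with cardinalities `c`)
is realizable by the pDAG `G` (with classical unrestricted semantics, arbitrary finite
cardinalities of the latent variables) if there are latent cardinalities `k`, error
cardinalities `e`, error distributions `PE` and functions `f` (each depending only on
the values of the parents and the local error variable) whose induced marginal on the
visible variables is `P`. -/
def pDAG.Realizable {V L : Type} [Fintype V] [Fintype L] [DecidableEq V] [DecidableEq L]
    (G : pDAG V L) (c : V → ℕ) (P : ((v : V) → Fin (c v)) → ℝ) : Prop :=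
  IsDist P ∧
  ∃ (k : L → ℕ) (e : V ⊕ L → ℕ)
    (PE : (a : V ⊕ L) → Fin (e a) → ℝ)
    (f : (a : V ⊕ L) → ((b : V ⊕ L) → Fin (Sum.elim c k b)) → Fin (e a) →
      Fin (Sum.elim c k a)),
    (∀ a, IsDist (PE a)) ∧
    (∀ a g g' ε, (∀ b, G.edge b a → g b = g' b) → f a g ε = f a g' ε) ∧
    ∀ xv : (v : V) → Fin (c v),
      P xv = ∑ xl : (l : L) → Fin (k l), ∑ ε : (a : V ⊕ L) → Fin (e a),
        ∏ a : V ⊕ L,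
          (if jointVal c k xv xl a = f a (jointVal c k xv xl) (ε a) then (1:ℝ) else 0)
            * PE a (ε a)

/-- `G` observationally dominates `G'`: for every assignment of finite cardinalities to
the visible variables, every distribution realizable by `G'` is realizable by `G`. -/
def pDAG.ObsDominates {V L L' : Type} [Fintype V] [Fintype L] [Fintype L']
    [DecidableEq V] [DecidableEq L] [DecidableEq L']
    (G : pDAG V L) (G' : pDAG V L') : Prop :=
  ∀ (c : V → ℕ) (P : ((v : V) → Fin (c v)) → ℝ), G'.Realizable c P → G.Realizable c P

/-- An mDAG: a DAG on the node type `V` together with a simplicial complex on `V`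
(a family of finite subsets containing all singletons and closed under subsets). -/
structure mDAG (V : Type) where
  edge : V → V → Prop
  acyclic : ∃ rank : V → ℕ, ∀ a b, edge a b → rank a < rank b
  faces : Finset (Finset V)
  singleton_mem : ∀ v : V, {v} ∈ faces
  down_closed : ∀ A B : Finset V, A ⊆ B → B ∈ faces → A ∈ faces

namespace mDAG

variable {V : Type}

/-- A facet is an inclusion-maximal face of the simplicial complex. -/
def IsFacet (G : mDAG V) (A : Finset V) : Prop :=
  A ∈ G.faces ∧ ∀ B ∈ G.faces, A ⊆ B → A = B

/-- An mDAG is confounder-free if every facet of its simplicial complex is a singleton. -/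
def ConfounderFree (G : mDAG V) : Prop :=
  ∀ A : Finset V, G.IsFacet A → ∃ v : V, A = {v}

/-- An mDAG is directed-edge-free if its directed structure has no edges. -/
def DirectedEdgeFree (G : mDAG V) : Prop :=
  ∀ a b : V, ¬ G.edge a b

/-- `G` structurally dominates `G'` if the directed edges of `G'` are a subset of those
of `G` and the simplicial complex of `G'` is contained in that of `G`. -/
def StructDominates (G G' : mDAG V) : Prop :=
  (∀ a b : V, G'.edge a b → G.edge a b) ∧ G'.faces ⊆ G.faces

/-- The type of facets of an mDAG. -/
def Facets (G : mDAG V) : Type := {A : Finset V // G.IsFacet A}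

noncomputable instance instFintypeFacets [Fintype V] [DecidableEq V] (G : mDAG V) :
    Fintype G.Facets := Subtype.fintype _

noncomputable instance instDecidableEqFacets (G : mDAG V) :
    DecidableEq G.Facets := Classical.decEq _

/-- The canonical pDAG of an mDAG: the visible nodes carry the directed structure, and
there is one exogenous latent node per facet, whose children are exactly the members
of that facet. -/
def canon (G : mDAG V) : pDAG V G.Facets where
  edge a b :=
    match a, b with
    | Sum.inl u, Sum.inl v => G.edge u v
    | Sum.inr A, Sum.inl v => v ∈ A.1
    | _, Sum.inr _ => False
  acyclic := by
    obtain ⟨r, hr⟩ := G.acyclic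
    refine ⟨Sum.elim (fun v => r v + 1) (fun _ => 0), ?_⟩
    rintro (u | A) (v | B) h
    · simpa using hr u v h
    · exact h.elim
    · simp
    · exact h.elim

/-- Realizability of a distribution over the visible variables by an mDAG (via its
canonical pDAG). -/
def Realizable [Fintype V] [DecidableEq V] (G : mDAG V) (c : V → ℕ)
    (P : ((v : V) → Fin (c v)) → ℝ) : Prop :=
  G.canon.Realizable c P

/-- Observational dominance of mDAGs: for every assignment of finite cardinalities to
the visible nodes, every distribution realizable by `G'` is realizable by `G`. -/
def ObsDominates [Fintype V] [DecidableEq V] (G G' : mDAG V) : Prop :=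
  ∀ (c : V → ℕ) (P : ((v : V) → Fin (c v)) → ℝ), G'.Realizable c P → G.Realizable c P

/-- Observational equivalence of mDAGs. -/
def ObsEquiv [Fintype V] [DecidableEq V] (G G' : mDAG V) : Prop :=
  ∀ (c : V → ℕ) (P : ((v : V) → Fin (c v)) → ℝ), G.Realizable c P ↔ G'.Realizable c P

/-- Consistency with the fixed nodal ordering given by the order on `V`:
a later node is never an ancestor of an earlier node. -/
def OrderConsistent [LT V] (G : mDAG V) : Prop :=
  ∀ i j : V, i < j → ¬ Relation.TransGen G.edge j i

/-- `G'` is obtained from `G` by relabelling the nodes with the permutation `π`. -/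
def IsRelabel (π : Equiv.Perm V) (G G' : mDAG V) : Prop :=
  (∀ a b : V, G'.edge (π a) (π b) ↔ G.edge a b) ∧
  G'.faces = G.faces.image (Finset.image π)

/-- Adjacency in the skeleton of an mDAG: a directed edge in either direction, or
joint membership in some face of the simplicial complex. -/
def skelAdj (G : mDAG V) (u w : V) : Prop :=
  G.edge u w ∨ G.edge w u ∨ ∃ A ∈ G.faces, u ∈ A ∧ w ∈ A

end mDAG

/-! ## d-separation and e-separation -/

/-- Undirected adjacency underlying a directed graph. -/
def AdjRel {N : Type} (E : N → N → Prop) (a b : N) : Prop := E a b ∨ E b a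

/-- The middle node `y` of a consecutive triple `(x, y, z)` of a path does not block the
path given the conditioning set `C`: if `y` is a collider it has a descendant in `C`
(possibly itself), and if it is a non-collider it is not in `C`. -/
def ActiveTriple {N : Type} (E : N → N → Prop) (C : Set N) (x y z : N) : Prop :=
  ((E x y ∧ E z y) ∧ ∃ d ∈ C, Relation.ReflTransGen E y d) ∨
  (¬(E x y ∧ E z y) ∧ y ∉ C)

/-- Every consecutive triple of the path is active given the conditioning set `C`. -/
def TriplesActive {N : Type} (E : N → N → Prop) (C : Set N) : List N → Prop
  | x :: y :: z :: rest => ActiveTriple E C x y z ∧ TriplesActive E C (y :: z :: rest)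
  | _ => True

/-- `A` and `B` are d-connected given `C`: there is a (repetition-free, undirected)
path from a node of `A` to a node of `B` that is not blocked by `C`. -/
def DConnected {N : Type} (E : N → N → Prop) (A B C : Set N) : Prop :=
  ∃ p : List N, p.Chain' (AdjRel E) ∧ p.Nodup ∧
    (∃ a ∈ A, p.head? = some a) ∧ (∃ b ∈ B, p.getLast? = some b) ∧
    TriplesActive E C p

/-- d-separation: every undirected path from `A` to `B` is blocked by `C`. -/
def DSeparated {N : Type} (E : N → N → Prop) (A B C : Set N) : Prop :=
  ¬ DConnected E A B C

namespace mDAG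

variable {V : Type}

/-- d-separation of sets of (visible) nodes of an mDAG, evaluated in its canonical pDAG. -/
def dsep (G : mDAG V) (A B C : Set V) : Prop :=
  DSeparated G.canon.edge (Sum.inl '' A) (Sum.inl '' B) (Sum.inl '' C)

end mDAG

/-- The edge relation of a pDAG after deletion of the visible nodes in `D`. -/
def delEdge {V L : Type} (E : V ⊕ L → V ⊕ L → Prop) (D : Set V) (a b : V ⊕ L) : Prop :=
  E a b ∧ (∀ v, a = Sum.inl v → v ∉ D) ∧ (∀ v, b = Sum.inl v → v ∉ D)

namespace mDAG

variable {V : Type}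

/-- e-separation: `A` and `B` are e-separated by `C` after deletion of `D` if they are
d-separated by `C` in the subgraph of the canonical pDAG obtained by deleting the nodes
in `D`. -/
def eSep (G : mDAG V) (A B C D : Set V) : Prop :=
  DSeparated (delEdge G.canon.edge D) (Sum.inl '' A) (Sum.inl '' B) (Sum.inl '' C)

end mDAG

/-! ## Conditional independence -/

/-- The probability that the variables in `S` take the values specified by `g`. -/
noncomputable def margProb {V : Type} [Fintype V] [DecidableEq V] (c : V → ℕ)
    (P : ((v : V) → Fin (c v)) → ℝ) (S : Set V) (g : (v : V) → Fin (c v)) : ℝ :=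
  ∑ x : (v : V) → Fin (c v), if ∀ v ∈ S, x v = g v then P x else 0

/-- `X_A ⊥⊥ X_B | X_C` in the distribution `P`:
`P(X_A X_B | X_C) = P(X_A | X_C) P(X_B | X_C)` whenever the conditioning event has
positive probability. -/
def CondIndep {V : Type} [Fintype V] [DecidableEq V] (c : V → ℕ)
    (P : ((v : V) → Fin (c v)) → ℝ) (A B C : Set V) : Prop :=
  ∀ g : (v : V) → Fin (c v), 0 < margProb c P C g →
    margProb c P (A ∪ B ∪ C) g * margProb c P C g
      = margProb c P (A ∪ C) g * margProb c P (B ∪ C) g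

/-! ## Districts, closures and densely connected pairs -/

namespace mDAG

variable {V : Type}

/-- One step of connection through a common face, within the node subset `S`. -/
def faceStep (G : mDAG V) (S : Set V) (x y : V) : Prop :=
  x ∈ S ∧ y ∈ S ∧ ∃ F ∈ G.faces, x ∈ F ∧ y ∈ F

/-- The district of the set `A` in the sub-mDAG induced on `S`. -/
def disIn (G : mDAG V) (S A : Set V) : Set V :=
  {w | ∃ a ∈ A, Relation.ReflTransGen (G.faceStep S) a w}

/-- The ancestors of the set `A` (including `A` itself) in the directed structure
restricted to `S`. -/
def anIn (G : mDAG V) (S A : Set V) : Set V :=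
  {w | ∃ a ∈ A, Relation.ReflTransGen (fun x y => x ∈ S ∧ y ∈ S ∧ G.edge x y) w a}

/-- The alternating sequence of district and ancestor restrictions used to define
the closure of a set of nodes. -/
def closureSeq (G : mDAG V) (A : Set V) : ℕ → Set V
  | 0 => Set.univ
  | n + 1 =>
      if n % 2 = 0 then G.disIn (G.closureSeq A n) A else G.anIn (G.closureSeq A n) A

/-- The closure of a set of nodes: the limit (intersection) of the decreasing
alternating sequence. -/
def closure (G : mDAG V) (A : Set V) : Set V := ⋂ n, G.closureSeq A n

/-- `S` is bidirected-connected: it forms a single district of the induced sub-mDAG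
on `S`. -/
def BidirConnected (G : mDAG V) (S : Set V) : Prop :=
  ∀ u ∈ S, ∀ w ∈ S, Relation.ReflTransGen (G.faceStep S) u w

/-- Two distinct nodes `v`, `w` are densely connected. -/
def DenselyConnected (G : mDAG V) (v w : V) : Prop :=
  (∃ u ∈ G.closure {w}, G.edge v u) ∨
  (∃ u ∈ G.closure {v}, G.edge w u) ∨
  G.BidirConnected (G.closure {v, w})

/-- `S` is a realizable support of the mDAG `G` at cardinalities `c`: some distribution
realizable by `G` at `c` has support exactly `S`. -/
def RealizableSupport [Fintype V] [DecidableEq V] (G : mDAG V) (c : V → ℕ)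
    (S : Set ((v : V) → Fin (c v))) : Prop :=
  ∃ P : ((v : V) → Fin (c v)) → ℝ, G.Realizable c P ∧ ∀ x, x ∈ S ↔ 0 < P x

end mDAG

/-! Every facet of `G'` is a face of `G`, hence lies in some facet `φ A'` of `G`. A latent node
`B` of `G` simulates all latent nodes of `G'` that `φ` sends to it: its value is the tuple of
their values and its error the tuple of their errors, both encoded in a `Fin` type. Under these
encodings the summands defining the two marginals agree term by term, and since `φ` maps edges
of the canonical pDAG of `G'` to edges of that of `G`, the simulated mechanisms only read
parents in `G`. -/

section Packing

variable {ι κ : Type} [Fintype ι] (φ : ι → κ) (n : ι → ℕ)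

noncomputable def packCard (b : κ) : ℕ :=
  Fintype.card ((a : {a // φ a = b}) → Fin (n a))

noncomputable def packEquiv (b : κ) :
    Fin (packCard φ n b) ≃ ((a : {a // φ a = b}) → Fin (n a)) :=
  (Fintype.equivFin _).symm

noncomputable def piPackEquiv : ((b : κ) → Fin (packCard φ n b)) ≃ ((a : ι) → Fin (n a)) where
  toFun x a := packEquiv φ n (φ a) (x (φ a)) ⟨a, rfl⟩
  invFun y b := (packEquiv φ n b).symm fun a => y a.1
  left_inv x := by
    funext b
    rw [Equiv.symm_apply_eq]
    funext ⟨a, ha⟩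
    subst ha
    rfl
  right_inv y := by
    funext a
    simp only [Equiv.apply_symm_apply]

theorem isDist_prod_packEquiv (b : κ) {Q : (a : ι) → Fin (n a) → ℝ} (hQ : ∀ a, IsDist (Q a)) :
    IsDist fun η : Fin (packCard φ n b) => ∏ a, Q a.1 (packEquiv φ n b η a) := by
  refine ⟨fun η => Finset.prod_nonneg fun a _ => (hQ a.1).1 _, ?_⟩
  calc ∑ η, ∏ a, Q a.1 (packEquiv φ n b η a)
      = ∑ t : (a : {a // φ a = b}) → Fin (n a), ∏ a, Q a.1 (t a) :=
        Fintype.sum_equiv (packEquiv φ n b) _ _ fun _ => rfl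
    _ = ∏ a : {a // φ a = b}, ∑ j, Q a.1 j := by
        rw [Finset.prod_univ_sum, Fintype.piFinset_univ]
    _ = 1 := Finset.prod_eq_one fun a _ => (hQ a.1).2

end Packing

theorem ite_eq_symm_apply_eq_prod {α ι : Type} [DecidableEq α] [Fintype ι] {β : ι → Type}
    [∀ i, DecidableEq (β i)] (d : α ≃ ((i : ι) → β i))
    (x : α) (t : (i : ι) → β i) :
    (if x = d.symm t then (1 : ℝ) else 0) = ∏ i, if d x i = t i then 1 else 0 := by
  simp only [Fintype.prod_boole, Equiv.eq_symm_apply, funext_iff]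

section Push

variable {V L L' : Type} [Fintype L'] (φ : L' → L)

noncomputable def sumPushCard (n : V ⊕ L' → ℕ) : V ⊕ L → ℕ :=
  Sum.elim (fun v => n (.inl v)) (packCard φ fun A => n (.inr A))

noncomputable def sumPushEquiv (n : V ⊕ L' → ℕ) :
    ((a : V ⊕ L) → Fin (sumPushCard φ n a)) ≃ ((a' : V ⊕ L') → Fin (n a')) :=
  (Equiv.sumPiEquivProdPi fun a => Fin (sumPushCard φ n a)).trans <|
    ((Equiv.refl _).prodCongr (piPackEquiv φ fun A => n (.inr A))).trans
      (Equiv.sumPiEquivProdPi fun a' => Fin (n a')).symm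

theorem sumPushEquiv_jointVal (c : V → ℕ) (k' : L' → ℕ) (xv : (v : V) → Fin (c v))
    (xl : (B : L) → Fin (packCard φ k' B)) :
    sumPushEquiv φ (Sum.elim c k') (jointVal c (packCard φ k') xv xl)
      = jointVal c k' xv (piPackEquiv φ k' xl) := by
  funext a
  cases a <;> rfl

theorem sumPushEquiv_congr {n : V ⊕ L' → ℕ} {x y : (a : V ⊕ L) → Fin (sumPushCard φ n a)}
    {a' : V ⊕ L'} (h : x (Sum.map id φ a') = y (Sum.map id φ a')) :
    sumPushEquiv φ n x a' = sumPushEquiv φ n y a' := by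
  cases a' with
  | inl v => exact h
  | inr A => exact congrArg (fun z => packEquiv φ (fun A => n (.inr A)) (φ A) z ⟨A, rfl⟩) h

end Push

section PushModel

variable {V L L' : Type} [Fintype L'] (φ : L' → L) (c : V → ℕ) {k' : L' → ℕ} {e' : V ⊕ L' → ℕ}

noncomputable def pushDist (PE' : (a' : V ⊕ L') → Fin (e' a') → ℝ) :
    (a : V ⊕ L) → Fin (sumPushCard φ e' a) → ℝ
  | .inl v, η => PE' (.inl v) η
  | .inr B, η => ∏ A, PE' (.inr A.1) (packEquiv φ (fun A => e' (.inr A)) B η A)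

noncomputable def pushMech
    (f' : (a' : V ⊕ L') → ((b' : V ⊕ L') → Fin (Sum.elim c k' b')) → Fin (e' a') →
      Fin (Sum.elim c k' a')) :
    (a : V ⊕ L) → ((b : V ⊕ L) → Fin (Sum.elim c (packCard φ k') b)) →
      Fin (sumPushCard φ e' a) → Fin (Sum.elim c (packCard φ k') a)
  | .inl v, g, η => f' (.inl v) (sumPushEquiv φ (Sum.elim c k') g) η
  | .inr B, g, η => (packEquiv φ k' B).symm fun A =>
      f' (.inr A.1) (sumPushEquiv φ (Sum.elim c k') g) (packEquiv φ (fun A => e' (.inr A)) B η A)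

theorem isDist_pushDist {PE' : (a' : V ⊕ L') → Fin (e' a') → ℝ} (hPE' : ∀ a', IsDist (PE' a'))
    (a : V ⊕ L) : IsDist (pushDist φ PE' a) := by
  cases a with
  | inl v => exact hPE' (.inl v)
  | inr B => exact isDist_prod_packEquiv φ _ B fun A => hPE' (.inr A)

theorem pushMech_congr {G : pDAG V L} {G' : pDAG V L'}
    (hφ : ∀ a b, G'.edge a b → G.edge (Sum.map id φ a) (Sum.map id φ b))
    {f' : (a' : V ⊕ L') → ((b' : V ⊕ L') → Fin (Sum.elim c k' b')) → Fin (e' a') →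
      Fin (Sum.elim c k' a')}
    (hf' : ∀ a' g g' ε, (∀ b', G'.edge b' a' → g b' = g' b') → f' a' g ε = f' a' g' ε)
    (a : V ⊕ L) (g g' : (b : V ⊕ L) → Fin (Sum.elim c (packCard φ k') b))
    (η : Fin (sumPushCard φ e' a)) (hg : ∀ b, G.edge b a → g b = g' b) :
    pushMech φ c f' a g η = pushMech φ c f' a g' η := by
  cases a with
  | inl v => exact hf' _ _ _ _ fun b' hb' => sumPushEquiv_congr φ (hg _ (hφ _ _ hb'))
  | inr B =>
    refine congrArg (packEquiv φ k' B).symm (funext fun A => hf' _ _ _ _ fun b' hb' => ?_)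
    refine sumPushEquiv_congr φ (hg _ ?_)
    simpa [A.2] using hφ _ _ hb'

theorem prod_pushMech_eq [Fintype V] [Fintype L] (PE' : (a' : V ⊕ L') → Fin (e' a') → ℝ)
    (f' : (a' : V ⊕ L') → ((b' : V ⊕ L') → Fin (Sum.elim c k' b')) → Fin (e' a') →
      Fin (Sum.elim c k' a'))
    (xv : (v : V) → Fin (c v)) (xl : (B : L) → Fin (packCard φ k' B))
    (ε : (a : V ⊕ L) → Fin (sumPushCard φ e' a)) :
    ∏ a : V ⊕ L, (if jointVal c (packCard φ k') xv xl a
        = pushMech φ c f' a (jointVal c (packCard φ k') xv xl) (ε a) then (1 : ℝ) else 0)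
          * pushDist φ PE' a (ε a)
      = ∏ a' : V ⊕ L', (if jointVal c k' xv (piPackEquiv φ k' xl) a'
        = f' a' (jointVal c k' xv (piPackEquiv φ k' xl)) (sumPushEquiv φ e' ε a') then 1 else 0)
          * PE' a' (sumPushEquiv φ e' ε a') := by
  rw [← sumPushEquiv_jointVal, Fintype.prod_sum_type, Fintype.prod_sum_type,
    ← Fintype.prod_fiberwise φ]
  -- The visible factors agree definitionally; the factor of a latent `B` splits over `φ⁻¹ B`.
  congr 1
  refine Finset.prod_congr rfl fun B _ => ?_
  dsimp only [pushMech, pushDist]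
  refine (congrArg (· * _) (ite_eq_symm_apply_eq_prod (packEquiv φ k' B) (xl B) _)).trans ?_
  rw [← Finset.prod_mul_distrib]
  refine Finset.prod_congr rfl fun ⟨A, hA⟩ _ => ?_
  subst hA
  rfl

end PushModel

theorem pDAG.obsDominates_of_map {V L L' : Type} [Fintype V] [Fintype L] [Fintype L']
    [DecidableEq V] [DecidableEq L] [DecidableEq L'] {G : pDAG V L} {G' : pDAG V L'}
    (φ : L' → L) (hφ : ∀ a b, G'.edge a b → G.edge (Sum.map id φ a) (Sum.map id φ b)) :
    G.ObsDominates G' := by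
  rintro c P ⟨hP, k', e', PE', f', hPE', hf', hsum⟩
  refine ⟨hP, packCard φ k', sumPushCard φ e', pushDist φ PE', pushMech φ c f',
    isDist_pushDist φ hPE', pushMech_congr φ c hφ hf', fun xv => ?_⟩
  rw [hsum xv]
  refine (Fintype.sum_equiv (piPackEquiv φ k') _ _ fun xl => ?_).symm
  refine Fintype.sum_equiv (sumPushEquiv φ e') _ _ fun ε => ?_
  exact prod_pushMech_eq φ c PE' f' xv xl ε

namespace mDAG

variable {V : Type}

theorem exists_isFacet_superset (G : mDAG V) {A : Finset V} (hA : A ∈ G.faces) :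
    ∃ B, G.IsFacet B ∧ A ⊆ B := by
  obtain ⟨B, hAB, hB⟩ := G.faces.exists_le_maximal hA
  exact ⟨B, ⟨hB.1, fun C hC hBC => le_antisymm hBC (hB.2 hC hBC)⟩, hAB⟩

theorem StructDominates.canon_edge_map {G G' : mDAG V} (h : G.StructDominates G')
    (φ : G'.Facets → G.Facets) (hφ : ∀ A, A.1 ⊆ (φ A).1) (a b : V ⊕ G'.Facets)
    (hab : G'.canon.edge a b) : G.canon.edge (Sum.map id φ a) (Sum.map id φ b) := by
  rcases a with u | A <;> rcases b with v | B
  · exact h.1 u v hab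
  · exact hab.elim
  · exact hφ A hab
  · exact hab.elim

end mDAG

/-- If the mDAG `G` structurally dominates the mDAG `G'` (on the same
node set), then `G` observationally dominates `G'`: for every assignment `c` of finite
cardinalities to the visible nodes, every probability distribution realizable by `G'`
at `c` is realizable by `G` at `c`. -/
theorem structural_dominance_implies_observational_dominance
    {V : Type} [Fintype V] [DecidableEq V] (G G' : mDAG V)
    (h : G.StructDominates G') :
    ∀ (c : V → ℕ) (P : ((v : V) → Fin (c v)) → ℝ),
      G'.Realizable c P → G.Realizable c P := by
  choose φ hφ using fun A : G'.Facets => G.exists_isFacet_superset (h.2 A.2.1)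
  exact pDAG.obsDominates_of_map (fun A => ⟨φ A, (hφ A).1⟩)
    (h.canon_edge_map _ fun A => (hφ A).2)
end

section
/- (HLP edge-adding rule) Let 𝔊 = (D,B) be an mDAG and let x, y be two of its nodes such that adding the directed edge x→y to D keeps it acyclic. Suppose that (1) every parent of x in D is a parent of y in D, and (2) every facet of B that contains x also contains y. Let 𝔊' be the mDAG obtained from 𝔊 by adding the directed edge x→y. Then 𝔊 observationally dominates 𝔊'; consequently (since 𝔊' structurally dominates 𝔊) the two mDAGs are observationally equivalent. -/
open scoped Classical

/-! Given a model of the mDAG with the extra edge `x → y`, one builds a model without it: pick a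
facet `l₀` containing `x` (hence `y`) and let its latent variable carry, besides its old value, an
independent copy of the error variable of `x`, from which `x` is now computed. Every parent of `x`,
including `l₀`, is a parent of `y`, so `y` can recompute the value of `x` itself and feed it to its
old function. Summing out the copies carried by the other latent variables recovers the original
distribution. The reverse dominance holds because a model of a graph is also a model of any graph
with more edges. -/

section PushProb

variable {ε α β : Type} [Fintype ε] [Fintype β] [DecidableEq α]

def pushProb (p : ε → ℝ) (h : ε → α) (t : α) : ℝ :=
  ∑ s, (if t = h s then (1 : ℝ) else 0) * p s

lemma pushProb_const {p : ε → ℝ} (hp : IsDist p) (a t : α) :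
    pushProb p (fun _ => a) t = if t = a then 1 else 0 := by
  rw [pushProb, ← Finset.mul_sum, hp.2, mul_one]

def finProdDist {m n : ℕ} (p : Fin m → ℝ) (q : Fin n → ℝ) (s : Fin (m * n)) : ℝ :=
  p (finProdFinEquiv.symm s).1 * q (finProdFinEquiv.symm s).2

lemma isDist_finProdDist {m n : ℕ} {p : Fin m → ℝ} {q : Fin n → ℝ} (hp : IsDist p)
    (hq : IsDist q) : IsDist (finProdDist p q) := by
  refine ⟨fun s => mul_nonneg (hp.1 _) (hq.1 _), ?_⟩
  rw [← finProdFinEquiv.sum_comp, Fintype.sum_prod_type]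
  simp only [finProdDist, Equiv.symm_apply_apply]
  rw [← Finset.sum_mul_sum, hp.2, hq.2, mul_one]

lemma pushProb_finProdDist {m n r : ℕ} (p : Fin m → ℝ) (q : Fin n → ℝ) (h : Fin m → Fin r)
    (t : Fin r) (u : Fin n) :
    pushProb (finProdDist p q)
        (fun s => finProdFinEquiv (h (finProdFinEquiv.symm s).1, (finProdFinEquiv.symm s).2))
        (finProdFinEquiv (t, u))
      = pushProb p h t * q u := by
  rw [pushProb, pushProb, ← finProdFinEquiv.sum_comp, Fintype.sum_prod_type, Finset.sum_mul]
  refine Finset.sum_congr rfl fun s _ => ?_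
  simp only [finProdDist, Equiv.symm_apply_apply, EmbeddingLike.apply_eq_iff_eq,
    Prod.mk.injEq, ite_and]
  rw [Finset.sum_eq_single u] <;> intros <;> split_ifs <;> simp_all

lemma sum_eval_mul_prod_eq {ι : Type} [Fintype ι] [DecidableEq ι] {q : β → ℝ} (hq : ∑ b, q b = 1)
    (i₀ : ι) (H : β → ℝ) :
    ∑ w : ι → β, H (w i₀) * ∏ i, q (w i) = ∑ b, H b * q b := by
  have hsplit : ∀ w : ι → β, H (w i₀) * ∏ i, q (w i)
      = ∏ i, (if i = i₀ then H (w i) else 1) * q (w i) := by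
    intro w
    rw [Finset.prod_mul_distrib, Finset.prod_ite_eq' Finset.univ i₀]
    simp
  simp_rw [hsplit]
  rw [← Fintype.prod_sum (fun i b => (if i = i₀ then H b else 1) * q b)]
  simp_rw [ite_mul, one_mul, Finset.sum_ite_irrel, hq]
  simp

end PushProb

namespace pDAG

abbrev Config {V L : Type} (c : V → ℕ) (k : L → ℕ) : Type :=
  (a : V ⊕ L) → Fin (Sum.elim c k a)

variable {V L L' : Type}

structure Model (G : pDAG V L) (c : V → ℕ) where
  k : L → ℕ
  e : V ⊕ L → ℕ
  PE : (a : V ⊕ L) → Fin (e a) → ℝ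
  f : (a : V ⊕ L) → Config c k → Fin (e a) → Fin (Sum.elim c k a)
  isDist_PE : ∀ a, IsDist (PE a)
  f_congr : ∀ a g g' s, (∀ b, G.edge b a → g b = g' b) → f a g s = f a g' s

variable [Fintype V] [Fintype L] [Fintype L'] [DecidableEq V] [DecidableEq L] [DecidableEq L']
  {G : pDAG V L} {c : V → ℕ}

def Model.prob (M : G.Model c) (xv : (v : V) → Fin (c v)) : ℝ :=
  ∑ xl : (l : L) → Fin (M.k l),
    ∏ a, pushProb (M.PE a) (M.f a (jointVal c M.k xv xl)) (jointVal c M.k xv xl a)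

theorem realizable_iff {P : ((v : V) → Fin (c v)) → ℝ} :
    G.Realizable c P ↔ IsDist P ∧ ∃ M : G.Model c, P = M.prob := by
  have hprob : ∀ M : G.Model c, ∀ xv, M.prob xv = ∑ xl : (l : L) → Fin (M.k l),
      ∑ ε : (a : V ⊕ L) → Fin (M.e a), ∏ a,
        (if jointVal c M.k xv xl a = M.f a (jointVal c M.k xv xl) (ε a) then (1 : ℝ) else 0)
          * M.PE a (ε a) := fun M xv =>
    Finset.sum_congr rfl fun xl _ => Fintype.prod_sum _
  constructor
  · rintro ⟨hP, k, e, PE, f, hPE, hf, hsum⟩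
    let M : G.Model c := ⟨k, e, PE, f, hPE, hf⟩
    exact ⟨hP, M, funext fun xv => (hsum xv).trans (hprob M xv).symm⟩
  · rintro ⟨hP, M, rfl⟩
    exact ⟨hP, M.k, M.e, M.PE, M.f, M.isDist_PE, M.f_congr, hprob M⟩

theorem obsDominates_of_forall_model {G' : pDAG V L'}
    (h : ∀ c (M : G'.Model c), ∃ N : G.Model c, N.prob = M.prob) : G.ObsDominates G' := by
  intro c P hP
  obtain ⟨hdist, M, rfl⟩ := realizable_iff.1 hP
  obtain ⟨N, hN⟩ := h c M
  exact realizable_iff.2 ⟨hdist, N, hN.symm⟩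

def Model.mono {G' : pDAG V L} (M : G.Model c) (h : ∀ a b, G.edge a b → G'.edge a b) :
    G'.Model c :=
  { M with f_congr := fun a g g' s hg => M.f_congr a g g' s fun b hb => hg b (h b a hb) }

theorem obsDominates_of_edge_le {G' : pDAG V L} (h : ∀ a b, G.edge a b → G'.edge a b) :
    G'.ObsDominates G :=
  obsDominates_of_forall_model fun _ M => ⟨M.mono h, rfl⟩

end pDAG

namespace pDAG.Model

open Function

variable {V L : Type} {G G' : pDAG V L} {c : V → ℕ} (M : G'.Model c) (x y : V) (l₀ : L)

-- Every latent node additionally carries an independent copy of the error of `x`; only the copy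
-- carried by `l₀` is ever read. The uniform choice keeps all value and error types simple.
def hlpK (l : L) : ℕ := M.k l * M.e (.inl x)

def hlpE : V ⊕ L → ℕ := Sum.elim (fun v => M.e (.inl v)) (fun l => M.e (.inr l) * M.e (.inl x))

def hlpPE : (a : V ⊕ L) → Fin (M.hlpE x a) → ℝ
  | .inl v => M.PE (.inl v)
  | .inr l => finProdDist (M.PE (.inr l)) (M.PE (.inl x))

def unpack (g : Config c (M.hlpK x)) : Config c M.k
  | .inl v => g (.inl v)
  | .inr l => (finProdFinEquiv.symm (g (.inr l))).1

def copyOf (g : Config c (M.hlpK x)) : Fin (M.e (.inl x)) :=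
  (finProdFinEquiv.symm (g (.inr l₀))).2

variable {M x y l₀}

lemma unpack_congr {g g' : Config c (M.hlpK x)} {b : V ⊕ L} (h : g b = g' b) :
    M.unpack x g b = M.unpack x g' b := by
  cases b <;> simp only [unpack] <;> rw [h]

lemma unpack_jointVal (xv : (v : V) → Fin (c v)) (xl : (l : L) → Fin (M.k l))
    (w : L → Fin (M.e (.inl x))) :
    M.unpack x (jointVal c (M.hlpK x) xv fun l => finProdFinEquiv (xl l, w l))
      = jointVal c M.k xv xl := by
  funext b
  cases b <;> simp [unpack, jointVal]

lemma f_unpack_copyOf_congr (hxy : x ≠ y) (hl₀ : G.edge (.inr l₀) (.inl x))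
    (hedge : ∀ a b, G'.edge a b → G.edge a b ∨ a = .inl x ∧ b = .inl y)
    {g g' : Config c (M.hlpK x)} (hg : ∀ b, G.edge b (.inl x) → g b = g' b) :
    M.f (.inl x) (M.unpack x g) (M.copyOf x l₀ g)
      = M.f (.inl x) (M.unpack x g') (M.copyOf x l₀ g') := by
  rw [copyOf, copyOf, hg _ hl₀]
  refine M.f_congr _ _ _ _ fun b hb => unpack_congr (hg b ?_)
  exact (hedge b _ hb).resolve_right fun h => hxy (Sum.inl_injective h.2)

variable (M x y l₀) [DecidableEq V] [DecidableEq L]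

-- The new visible mechanisms, given the old values `g` and the copy `t` of the error of `x`:
-- `x` is driven by `t`, and `y` sees `x` recomputed from `t` and the parents of `x`.
def simVisible (g : Config c M.k) (t : Fin (M.e (.inl x))) :
    (v : V) → Fin (M.e (.inl v)) → Fin (Sum.elim c M.k (.inl v)) :=
  update (fun v => M.f (.inl v) (if v = y then update g (.inl x) (M.f (.inl x) g t) else g))
    x (fun _ => M.f (.inl x) g t)

def hlpF : (a : V ⊕ L) → Config c (M.hlpK x) → Fin (M.hlpE x a) → Fin (Sum.elim c (M.hlpK x) a)
  | .inl v => fun g => M.simVisible x y (M.unpack x g) (M.copyOf x l₀ g) v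
  | .inr l => fun g s => finProdFinEquiv
      (M.f (.inr l) (M.unpack x g) (finProdFinEquiv.symm s).1, (finProdFinEquiv.symm s).2)

lemma simVisible_self (g : Config c M.k) (t : Fin (M.e (.inl x))) :
    M.simVisible x y g t x = fun _ => M.f (.inl x) g t :=
  update_self ..

lemma simVisible_of_ne (g : Config c M.k) (t : Fin (M.e (.inl x))) {v : V} (hv : v ≠ x) :
    M.simVisible x y g t v
      = M.f (.inl v) (if v = y then update g (.inl x) (M.f (.inl x) g t) else g) :=
  update_of_ne hv ..

variable {M x y l₀}

lemma hlpF_congr (hxy : x ≠ y) (hl₀ : G.edge (.inr l₀) (.inl x))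
    (hedge : ∀ a b, G'.edge a b → G.edge a b ∨ a = .inl x ∧ b = .inl y)
    (hpa : ∀ b, G.edge b (.inl x) → G.edge b (.inl y)) (a : V ⊕ L)
    (g g' : Config c (M.hlpK x)) (s : Fin (M.hlpE x a)) (hg : ∀ b, G.edge b a → g b = g' b) :
    M.hlpF x y l₀ a g s = M.hlpF x y l₀ a g' s := by
  have hedge' : ∀ {b a}, G'.edge b a → a ≠ .inl y → G.edge b a := fun hb ha =>
    (hedge _ _ hb).resolve_right fun h => ha h.2
  rcases a with v | l
  · by_cases hvx : v = x
    · subst hvx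
      simp only [hlpF, simVisible_self]
      exact f_unpack_copyOf_congr hxy hl₀ hedge hg
    simp only [hlpF, simVisible_of_ne _ _ _ _ _ hvx]
    refine M.f_congr _ _ _ _ fun b hb => ?_
    by_cases hvy : v = y
    · subst hvy
      rw [if_pos rfl, if_pos rfl]
      by_cases hbx : b = .inl x
      · subst hbx
        rw [update_self, update_self]
        exact f_unpack_copyOf_congr hxy hl₀ hedge fun b hb => hg b (hpa b hb)
      · rw [update_of_ne hbx, update_of_ne hbx]
        exact unpack_congr (hg b ((hedge _ _ hb).resolve_right fun h => hbx h.1))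
    · rw [if_neg hvy, if_neg hvy]
      exact unpack_congr (hg b (hedge' hb fun h => hvy (Sum.inl_injective h)))
  · simp only [hlpF]
    rw [M.f_congr _ _ (M.unpack x g') _ fun b hb => unpack_congr (hg b (hedge' hb Sum.inr_ne_inl))]

variable (M)

def hlp (hxy : x ≠ y) (hl₀ : G.edge (.inr l₀) (.inl x))
    (hedge : ∀ a b, G'.edge a b → G.edge a b ∨ a = .inl x ∧ b = .inl y)
    (hpa : ∀ b, G.edge b (.inl x) → G.edge b (.inl y)) : G.Model c where
  k := M.hlpK x
  e := M.hlpE x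
  PE := M.hlpPE x
  f := M.hlpF x y l₀
  isDist_PE
    | .inl v => M.isDist_PE (.inl v)
    | .inr l => isDist_finProdDist (M.isDist_PE (.inr l)) (M.isDist_PE (.inl x))
  f_congr := hlpF_congr hxy hl₀ hedge hpa

variable [Fintype V]

lemma sum_prod_pushProb_simVisible (g : Config c M.k) :
    ∑ t, (∏ v, pushProb (M.PE (.inl v)) (M.simVisible x y g t v) (g (.inl v))) * M.PE (.inl x) t
      = ∏ v, pushProb (M.PE (.inl v)) (M.f (.inl v) g) (g (.inl v)) := by
  have hsplit : ∀ t, ∏ v, pushProb (M.PE (.inl v)) (M.simVisible x y g t v) (g (.inl v))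
      = (if g (.inl x) = M.f (.inl x) g t then 1 else 0)
        * ∏ v ∈ {x}ᶜ, pushProb (M.PE (.inl v)) (M.f (.inl v) g) (g (.inl v)) := by
    intro t
    rw [Fintype.prod_eq_mul_prod_compl x, simVisible_self, pushProb_const (M.isDist_PE _)]
    by_cases hx : g (.inl x) = M.f (.inl x) g t
    · have hupd : update g (.inl x) (M.f (.inl x) g t) = g := by
        rw [← hx]
        exact update_eq_self _ _
      simp only [hx, ↓reduceIte, one_mul]
      refine Finset.prod_congr rfl fun v hv => ?_
      rw [simVisible_of_ne _ _ _ _ _ (by simpa using hv), hupd, ite_self]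
    · simp only [hx, ↓reduceIte, zero_mul]
  simp_rw [hsplit, mul_right_comm _ _ (M.PE _ _), ← Finset.sum_mul]
  rw [Fintype.prod_eq_mul_prod_compl x]
  rfl

variable [Fintype L]

lemma sum_prod_pushProb_hlp (xv : (v : V) → Fin (c v)) (xl : (l : L) → Fin (M.k l)) :
    ∑ w : L → Fin (M.e (.inl x)),
      ∏ a, pushProb (M.hlpPE x a)
        (M.hlpF x y l₀ a (jointVal c (M.hlpK x) xv fun l => finProdFinEquiv (xl l, w l)))
        (jointVal c (M.hlpK x) xv (fun l => finProdFinEquiv (xl l, w l)) a)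
      = ∏ a, pushProb (M.PE a) (M.f a (jointVal c M.k xv xl)) (jointVal c M.k xv xl a) := by
  set J := jointVal c M.k xv xl
  have hinl : ∀ (w : L → Fin (M.e (.inl x))) (v : V),
      pushProb (M.hlpPE x (.inl v))
        (M.hlpF x y l₀ (.inl v) (jointVal c (M.hlpK x) xv fun l => finProdFinEquiv (xl l, w l)))
        (xv v)
      = pushProb (M.PE (.inl v)) (M.simVisible x y J (w l₀) v) (J (.inl v)) := by
    intro w v
    simp only [hlpPE, hlpF, unpack_jointVal, copyOf, jointVal, Equiv.symm_apply_apply]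
    rfl
  have hinr : ∀ (w : L → Fin (M.e (.inl x))) (l : L),
      pushProb (M.hlpPE x (.inr l))
        (M.hlpF x y l₀ (.inr l) (jointVal c (M.hlpK x) xv fun l => finProdFinEquiv (xl l, w l)))
        (finProdFinEquiv (xl l, w l))
      = pushProb (M.PE (.inr l)) (M.f (.inr l) J) (J (.inr l)) * M.PE (.inl x) (w l) := by
    intro w l
    simp only [hlpPE, hlpF, unpack_jointVal]
    exact pushProb_finProdDist _ _ _ _ _
  simp only [Fintype.prod_sum_type]
  calc _ = ∑ w : L → Fin (M.e (.inl x)),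
          (∏ v, pushProb (M.PE (.inl v)) (M.simVisible x y J (w l₀) v) (J (.inl v)))
            * ((∏ l, pushProb (M.PE (.inr l)) (M.f (.inr l) J) (J (.inr l)))
              * ∏ l, M.PE (.inl x) (w l)) := by
        refine Finset.sum_congr rfl fun w _ => ?_
        rw [← Finset.prod_mul_distrib]
        exact congrArg₂ _ (Finset.prod_congr rfl fun v _ => hinl w v)
          (Finset.prod_congr rfl fun l _ => hinr w l)
    _ = (∏ l, pushProb (M.PE (.inr l)) (M.f (.inr l) J) (J (.inr l)))
          * ∑ t, (∏ v, pushProb (M.PE (.inl v)) (M.simVisible x y J t v) (J (.inl v)))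
            * M.PE (.inl x) t := by
        rw [← sum_eval_mul_prod_eq (M.isDist_PE _).2 l₀, Finset.mul_sum]
        exact Finset.sum_congr rfl fun w _ => by ring
    _ = _ := by rw [sum_prod_pushProb_simVisible, mul_comm]

theorem prob_hlp (hxy : x ≠ y) (hl₀ : G.edge (.inr l₀) (.inl x))
    (hedge : ∀ a b, G'.edge a b → G.edge a b ∨ a = .inl x ∧ b = .inl y)
    (hpa : ∀ b, G.edge b (.inl x) → G.edge b (.inl y)) :
    (M.hlp hxy hl₀ hedge hpa).prob = M.prob := by
  funext xv
  let pack : ((l : L) → Fin (M.k l)) × (L → Fin (M.e (.inl x))) ≃ ((l : L) → Fin (M.hlpK x l)) :=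
    (Equiv.arrowProdEquivProdArrow L _ _).symm.trans (Equiv.piCongrRight fun _ => finProdFinEquiv)
  rw [prob, prob]
  refine (pack.sum_comp _).symm.trans ?_
  rw [Fintype.sum_prod_type]
  exact Finset.sum_congr rfl fun xl _ => M.sum_prod_pushProb_hlp xv xl

end pDAG.Model

theorem pDAG.obsDominates_of_addEdge {V L : Type} [Fintype V] [Fintype L] [DecidableEq V]
    [DecidableEq L] {G G' : pDAG V L} {x y : V} {l₀ : L} (hxy : x ≠ y)
    (hl₀ : G.edge (.inr l₀) (.inl x))
    (hedge : ∀ a b, G'.edge a b → G.edge a b ∨ a = .inl x ∧ b = .inl y)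
    (hpa : ∀ b, G.edge b (.inl x) → G.edge b (.inl y)) :
    G.ObsDominates G' :=
  obsDominates_of_forall_model fun _ M => ⟨M.hlp hxy hl₀ hedge hpa, M.prob_hlp ..⟩

namespace mDAG

variable {V : Type}

lemma ne_of_edge (G : mDAG V) {a b : V} (h : G.edge a b) : a ≠ b := by
  rintro rfl
  obtain ⟨r, hr⟩ := G.acyclic
  exact lt_irrefl _ (hr a a h)

lemma exists_isFacet_mem (G : mDAG V) (x : V) : ∃ A, G.IsFacet A ∧ x ∈ A := by
  obtain ⟨A, hxA, hA⟩ := G.faces.finite_toSet.exists_le_maximal (G.singleton_mem x)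
  exact ⟨A, ⟨hA.prop, fun B hB hAB => hA.eq_of_le hB hAB⟩, Finset.singleton_subset_iff.1 hxA⟩

variable [Fintype V] [DecidableEq V]

theorem obsDominates_of_edge_le {G G' : mDAG V} (hfaces : G'.faces = G.faces)
    (h : ∀ a b, G.edge a b → G'.edge a b) : G'.ObsDominates G := by
  -- Once the faces are identified, `G'.Facets` is definitionally `G.Facets`.
  obtain ⟨E', hE', F', hsing, hdown⟩ := G'
  obtain rfl : F' = G.faces := hfaces
  refine pDAG.obsDominates_of_edge_le (G := G.canon) ?_
  rintro (u | B) (v | C) hb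
  exacts [h u v hb, hb, hb, hb]

theorem obsDominates_of_addEdge {G G' : mDAG V} {x y : V} (hfaces : G'.faces = G.faces)
    (hedge : ∀ a b, G'.edge a b → G.edge a b ∨ a = x ∧ b = y) (hxy : x ≠ y)
    (hpa : ∀ a, G.edge a x → G.edge a y) (hfacet : ∀ A, G.IsFacet A → x ∈ A → y ∈ A) :
    G.ObsDominates G' := by
  obtain ⟨A, hA, hxA⟩ := G.exists_isFacet_mem x
  obtain ⟨E', hE', F', hsing, hdown⟩ := G'
  obtain rfl : F' = G.faces := hfaces
  refine pDAG.obsDominates_of_addEdge (G := G.canon) (l₀ := ⟨A, hA⟩) hxy hxA ?_ ?_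
  · rintro (u | B) (v | C) hb
    exacts [(hedge u v hb).imp id fun h => ⟨congrArg _ h.1, congrArg _ h.2⟩, hb.elim, .inl hb,
      hb.elim]
  · rintro (u | B) hb
    exacts [hpa u hb, hfacet B.1 B.2 hb]

end mDAG

/-- (HLP edge-adding rule.)  Let `G = (D, B)` be an mDAG with nodes
`x`, `y` such that (1) every parent of `x` in `D` is a parent of `y` in `D`, and
(2) every facet of `B` containing `x` also contains `y`.  Let `G'` be the mDAG obtained
from `G` by adding the directed edge `x → y` (the acyclicity of the result is embodied
in the existence of `G'`).  Then `G` observationally dominates `G'`, and consequently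
the two mDAGs are observationally equivalent. -/
theorem hlp_edge_adding_rule
    {V : Type} [Fintype V] [DecidableEq V] (G G' : mDAG V) (x y : V)
    (hpa : ∀ a : V, G.edge a x → G.edge a y)
    (hfacet : ∀ A : Finset V, G.IsFacet A → x ∈ A → y ∈ A)
    (hedge : ∀ a b : V, G'.edge a b ↔ (G.edge a b ∨ (a = x ∧ b = y)))
    (hfaces : G'.faces = G.faces) :
    G.ObsDominates G' ∧ G.ObsEquiv G' := by
  have hxy : x ≠ y := G'.ne_of_edge ((hedge x y).2 (.inr ⟨rfl, rfl⟩))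
  have hdom : G.ObsDominates G' :=
    mDAG.obsDominates_of_addEdge hfaces (fun a b => (hedge a b).1) hxy hpa hfacet
  have hdom' : G'.ObsDominates G :=
    mDAG.obsDominates_of_edge_le hfaces fun a b h => (hedge a b).2 (.inl h)
  exact ⟨hdom, fun c P => ⟨hdom' c P, hdom c P⟩⟩
end
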